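/- arXiv:math/9407204 — 2 statements merged into one kernel-verified Lean document; each statement's English description precedes it below -/
import Mathlib

section
/- Let S be a Sacks tree of type ⟨2,2⟩, let C = C(Σ) be a cherry tree constructed from a system Σ = ⟨σ_s : s ∈ 2^{<ω}⟩, let E denote the set of even natural numbers, and let f : E → 2. Then the set of branches [C(Σ_f) ∩ S] is countable, where C(Σ_f) := {σ_s↾n : s ∈ 2^{<ω}, n ∈ ω, and s(i) = f(i) for all i ∈ E with i < |s|}. -/
/-- `σ` is a strictly increasing finite sequence of naturals (an element of `ω^{↑<ω}`). -/
def IncSeq (σ : List ℕ) : Prop := List.Chain' (· < ·) σ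

/-- A tree: a nonempty set of strictly increasing finite sequences closed under
initial segments. -/
def IsTree (T : Set (List ℕ)) : Prop :=
  T.Nonempty ∧ (∀ σ ∈ T, IncSeq σ) ∧ ∀ σ ∈ T, ∀ τ, τ <+: σ → τ ∈ T

/-- The initial segment of `f` of length `n`, as a finite sequence. -/
def seg (f : ℕ → ℕ) (n : ℕ) : List ℕ := (List.range n).map f

/-- The branches of `T`: strictly increasing `f : ℕ → ℕ` all of whose initial
segments lie in `T`. -/
def branches (T : Set (List ℕ)) : Set (ℕ → ℕ) :=
  {f | StrictMono f ∧ ∀ n, seg f n ∈ T}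

/-- The values of the immediate successors of `σ` in `T`. -/
def succs (T : Set (List ℕ)) (σ : List ℕ) : Set ℕ := {n | σ ++ [n] ∈ T}

/-- `σ` is a splitting node of `T`: it has at least two immediate successors. -/
def IsSplit (T : Set (List ℕ)) (σ : List ℕ) : Prop :=
  σ ∈ T ∧ ∃ m n : ℕ, m ≠ n ∧ σ ++ [m] ∈ T ∧ σ ++ [n] ∈ T

/-- `σ` is an infinite-splitting node of `T`. -/
def IsInfSplit (T : Set (List ℕ)) (σ : List ℕ) : Prop :=
  σ ∈ T ∧ (succs T σ).Infinite

/-- A Sacks tree: every node extends to a splitting node. -/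
def IsSacks (S : Set (List ℕ)) : Prop :=
  IsTree S ∧ ∀ σ ∈ S, ∃ τ, σ <+: τ ∧ IsSplit S τ

/-- A Miller tree: every node extends to an infinite-splitting node. -/
def IsMiller (M : Set (List ℕ)) : Prop :=
  IsTree M ∧ ∀ σ ∈ M, ∃ τ, σ <+: τ ∧ IsInfSplit M τ

/-- A Laver tree with stem `s`: `s` is comparable with all nodes, and every node
extending `s` has infinitely many immediate successors. -/
def IsLaverWithStem (L : Set (List ℕ)) (s : List ℕ) : Prop :=
  IsTree L ∧ s ∈ L ∧ (∀ σ ∈ L, σ <+: s ∨ s <+: σ) ∧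
    ∀ σ ∈ L, s <+: σ → (succs L σ).Infinite

/-- A Laver tree. -/
def IsLaver (L : Set (List ℕ)) : Prop := ∃ s, IsLaverWithStem L s

/-- The relation `R_i` (`i ∈ {0,1,2}`) on pairs of equal-length nodes: `ρ` has exactly
two immediate successor values `m₀ < m₁`, `τ` has a unique immediate successor value
`c`, and `m₁ < c` (if `i = 0`), `m₀ ≤ c ≤ m₁` (if `i = 1`), `c < m₀` (if `i = 2`). -/
def Rrel (S : Set (List ℕ)) (i : ℕ) (ρ τ : List ℕ) : Prop :=
  ∃ m₀ m₁ c : ℕ, m₀ < m₁ ∧ succs S ρ = {m₀, m₁} ∧ succs S τ = {c} ∧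
    ((i = 0 ∧ m₁ < c) ∨ (i = 1 ∧ m₀ ≤ c ∧ c ≤ m₁) ∨ (i = 2 ∧ c < m₀))

/-- A Sacks tree of type `⟨i,j⟩`: at most one splitting node on each level, every
splitting node has exactly two immediate successors, and for every splitting node `σ`
with successor values `n₀ < n₁`, all pairs `⟨ρ,τ⟩` of equal-length nodes with
`ρ ∈ split(S)` satisfy: `σ⌢⟨n₀⟩ ⊆ ρ ∧ σ⌢⟨n₁⟩ ⊆ τ → ⟨ρ,τ⟩ ∈ R_i` and
`σ⌢⟨n₁⟩ ⊆ ρ ∧ σ⌢⟨n₀⟩ ⊆ τ → ⟨ρ,τ⟩ ∈ R_j`. -/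
def IsTypeTree (S : Set (List ℕ)) (i j : ℕ) : Prop :=
  IsSacks S ∧
  (∀ σ τ, IsSplit S σ → IsSplit S τ → σ.length = τ.length → σ = τ) ∧
  (∀ σ, IsSplit S σ → ∃ n₀ n₁ : ℕ, n₀ < n₁ ∧ succs S σ = {n₀, n₁}) ∧
  ∀ σ n₀ n₁, IsSplit S σ → n₀ < n₁ → succs S σ = {n₀, n₁} →
    ∀ ρ τ, IsSplit S ρ → τ ∈ S → ρ.length = τ.length →
      ((σ ++ [n₀]) <+: ρ → (σ ++ [n₁]) <+: τ → Rrel S i ρ τ) ∧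
      ((σ ++ [n₁]) <+: ρ → (σ ++ [n₀]) <+: τ → Rrel S j ρ τ)

/-- The initial segment of `f : ℕ → Bool` of length `n`, as an element of `2^{<ω}`. -/
def restr (f : ℕ → Bool) (n : ℕ) : List Bool := (List.range n).map f

/-- `φ = ⋃_n σfam (f↾n)`: `φ` extends every member of the chain
`⟨σfam (f↾n) : n ∈ ω⟩`. -/
def IsUnionOf (σfam : List Bool → List ℕ) (f : ℕ → Bool) (φ : ℕ → ℕ) : Prop :=
  ∀ n k, k < (σfam (restr f n)).length → φ k = (σfam (restr f n)).getD k 0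

/-- The family `⟨σ_s : s ∈ 2^{<ω}⟩` determines a cherry tree; conditions (I)–(III). -/
def IsCherrySystem (σfam : List Bool → List ℕ) : Prop :=
  (∀ s, IncSeq (σfam s)) ∧
  -- (I)
  (∀ s t : List Bool, s <+: t → s ≠ t → σfam s <+: σfam t ∧ σfam s ≠ σfam t) ∧
  -- (II)
  (∀ s : List Bool,
    (σfam (s ++ [false])).getD (σfam s).length 0 <
      (σfam (s ++ [true])).getD (σfam s).length 0) ∧
  -- (III)
  (∀ (s : List Bool) (f₀ f₁ : ℕ → Bool) (φ₀ φ₁ : ℕ → ℕ),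
    restr f₀ (s.length + 1) = s ++ [false] →
    restr f₁ (s.length + 1) = s ++ [true] →
    IsUnionOf σfam f₀ φ₀ → IsUnionOf σfam f₁ φ₁ →
    ∀ n : ℕ,
      φ₀ ((σfam (restr f₀ (s.length + 2 * n))).length) <
        φ₁ ((σfam (restr f₀ (s.length + 2 * n))).length) ∧
      φ₀ ((σfam (restr f₀ (s.length + 2 * n + 1))).length) >
        φ₁ ((σfam (restr f₀ (s.length + 2 * n + 1))).length) ∧
      φ₁ ((σfam (restr f₁ (s.length + 2 * n))).length) >
        φ₀ ((σfam (restr f₁ (s.length + 2 * n))).length) ∧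
      φ₁ ((σfam (restr f₁ (s.length + 2 * n + 1))).length) <
        φ₀ ((σfam (restr f₁ (s.length + 2 * n + 1))).length))

/-- The cherry tree `C(Σ)`: the closure of `{σ_s : s ∈ 2^{<ω}}` under initial
segments. -/
def cherryTree (σfam : List Bool → List ℕ) : Set (List ℕ) :=
  {ρ | ∃ t, ρ <+: σfam t}

/-- The subtree `C(Σ_f)` of the cherry tree `C(Σ)`: initial segments of those
`σ_s` where `s` agrees with `f` on all even coordinates. -/
def cherryRestrict (σfam : List Bool → List ℕ) (f : ℕ → Bool) : Set (List ℕ) :=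
  {ρ | ∃ s : List Bool,
    (∀ i < s.length, Even i → s.getD i false = f i) ∧ ρ <+: σfam s}


/-! ### Auxiliary machinery for Lemma 7 -/

/-- `σ` is an initial segment of `φ`. -/
def IsPref (σ : List ℕ) (φ : ℕ → ℕ) : Prop := ∀ k < σ.length, σ.getD k 0 = φ k

namespace CherryAux

@[simp] lemma seg_length (φ : ℕ → ℕ) (n : ℕ) : (seg φ n).length = n := by
  simp [seg]

@[simp] lemma restr_length (g : ℕ → Bool) (n : ℕ) : (restr g n).length = n := by
  simp [restr]

lemma seg_getElem (φ : ℕ → ℕ) {n k : ℕ} (h : k < (seg φ n).length) : (seg φ n)[k] = φ k := by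
  simp [seg]

lemma seg_getD (φ : ℕ → ℕ) {n k : ℕ} (h : k < n) : (seg φ n).getD k 0 = φ k := by
  rw [List.getD_eq_getElem _ _ (by simpa using h), seg_getElem]

lemma seg_succ (φ : ℕ → ℕ) (n : ℕ) : seg φ (n + 1) = seg φ n ++ [φ n] := by
  simp [seg, List.range_succ]

lemma restr_succ (g : ℕ → Bool) (n : ℕ) : restr g (n + 1) = restr g n ++ [g n] := by
  simp [restr, List.range_succ]

lemma seg_prefix (φ : ℕ → ℕ) {a b : ℕ} (h : a ≤ b) : seg φ a <+: seg φ b := by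
  rw [List.prefix_iff_eq_take]
  simp [seg, ← List.map_take, List.take_range, Nat.min_eq_left h]

lemma restr_prefix (g : ℕ → Bool) {a b : ℕ} (h : a ≤ b) : restr g a <+: restr g b := by
  rw [List.prefix_iff_eq_take]
  simp [restr, ← List.map_take, List.take_range, Nat.min_eq_left h]

lemma eq_seg_of_prefix_seg {φ : ℕ → ℕ} {p : List ℕ} {n : ℕ} (h : p <+: seg φ n) :
    p = seg φ p.length := by
  have hlen : p.length ≤ n := by simpa using h.length_le
  have h2 : seg φ p.length <+: seg φ n := seg_prefix φ hlen
  exact (List.prefix_of_prefix_length_le h h2 (by simp)).eq_of_length (by simp)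

lemma pref_eq_seg {σ : List ℕ} {φ : ℕ → ℕ} (h : IsPref σ φ) : σ = seg φ σ.length := by
  refine List.ext_getElem (by simp) fun k h₁ h₂ => ?_
  rw [seg_getElem, ← List.getD_eq_getElem σ 0 h₁]
  exact h k h₁

lemma seg_isPref (φ : ℕ → ℕ) (n : ℕ) : IsPref (seg φ n) φ := by
  intro k hk
  exact seg_getD φ (by simpa using hk)

lemma restr_eq_of_agree {g h : ℕ → Bool} {n : ℕ} (hag : ∀ j < n, g j = h j) :
    restr g n = restr h n := by
  refine List.ext_getElem (by simp) fun k h₁ h₂ => ?_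
  simp only [restr, List.getElem_map, List.getElem_range]
  exact hag _ (by simpa using h₁)

/-- The first difference of two `<+:`-incomparable lists. -/
lemma firstDiff {α : Type*} : ∀ (ρ τ : List α), ¬ ρ <+: τ → ¬ τ <+: ρ →
    ∃ r a b, a ≠ b ∧ r ++ [a] <+: ρ ∧ r ++ [b] <+: τ
  | [], τ, h1, _ => absurd (List.nil_prefix) h1
  | ρ, [], _, h2 => absurd (List.nil_prefix) h2
  | x :: ρ, y :: τ, h1, h2 => by
    by_cases hxy : x = y
    · subst hxy
      obtain ⟨r, a, b, hab, hr1, hr2⟩ :=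
        firstDiff ρ τ (fun h => h1 (List.cons_prefix_cons.2 ⟨rfl, h⟩))
          (fun h => h2 (List.cons_prefix_cons.2 ⟨rfl, h⟩))
      exact ⟨x :: r, a, b, hab, List.cons_prefix_cons.2 ⟨rfl, hr1⟩,
        List.cons_prefix_cons.2 ⟨rfl, hr2⟩⟩
    · exact ⟨[], x, y, hxy, List.cons_prefix_cons.2 ⟨rfl, List.nil_prefix⟩,
        List.cons_prefix_cons.2 ⟨rfl, List.nil_prefix⟩⟩

lemma prefix_snoc_getD {α : Type*} {t u : List α} (d : α) (h : t <+: u)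
    (hlt : t.length < u.length) : t ++ [u.getD t.length d] <+: u := by
  obtain ⟨r, rfl⟩ := h
  cases r with
  | nil => simp at hlt
  | cons c r' =>
    have : (t ++ c :: r').getD t.length d = c := by
      rw [List.getD_eq_getElem _ _ (by simp)]
      rw [List.getElem_append_right (by omega)]
      simp
    rw [this]
    exact ⟨r', by simp⟩

lemma getD_snoc_length {α : Type*} (t : List α) (b d : α) : (t ++ [b]).getD t.length d = b := by
  rw [List.getD_eq_getElem _ _ (by simp)]
  rw [List.getElem_append_right (by omega)]
  simp

/-! ### Cherry-system facts -/

variable {σfam : List Bool → List ℕ}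

lemma prefix_getD {α : Type*} {p l : List α} (h : p <+: l) {k : ℕ} (hk : k < p.length)
    (d : α) : p.getD k d = l.getD k d := by
  rw [List.getD_eq_getElem _ _ hk, List.getD_eq_getElem _ _ (by have := h.length_le; omega)]
  exact h.getElem _

lemma sig_mono (hσ : IsCherrySystem σfam) {s t : List Bool} (h : s <+: t) :
    σfam s <+: σfam t := by
  rcases eq_or_ne s t with rfl | hne
  · exact List.prefix_refl _
  · exact (hσ.2.1 s t h hne).1

lemma sig_len_lt (hσ : IsCherrySystem σfam) {s t : List Bool} (h : s <+: t) (hne : s ≠ t) :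
    (σfam s).length < (σfam t).length := by
  obtain ⟨hp, hne'⟩ := hσ.2.1 s t h hne
  rcases lt_or_eq_of_le hp.length_le with h' | h'
  · exact h'
  · exact absurd (hp.eq_of_length h') hne'

lemma len_lt_len_snoc (hσ : IsCherrySystem σfam) (s : List Bool) (b : Bool) :
    (σfam s).length < (σfam (s ++ [b])).length :=
  sig_len_lt hσ ⟨[b], rfl⟩ (by simp)

lemma snoc_val_ne (hσ : IsCherrySystem σfam) (s : List Bool) {b b' : Bool} (h : b ≠ b') :
    (σfam (s ++ [b])).getD (σfam s).length 0 ≠ (σfam (s ++ [b'])).getD (σfam s).length 0 := by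
  have h2 := hσ.2.2.1 s
  cases b <;> cases b' <;> simp_all <;> omega

lemma sig_restr_len_mono (hσ : IsCherrySystem σfam) (q : ℕ → Bool) {a b : ℕ} (h : a < b) :
    (σfam (restr q a)).length < (σfam (restr q b)).length :=
  sig_len_lt hσ (restr_prefix q h.le) (fun he => by
    have := congrArg List.length he
    simp at this; omega)

lemma sig_restr_len_ge (hσ : IsCherrySystem σfam) (q : ℕ → Bool) (n : ℕ) :
    n ≤ (σfam (restr q n)).length := by
  induction n with
  | zero => omega
  | succ n ih => have := sig_restr_len_mono hσ q (show n < n + 1 by omega); omega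

lemma index_prefix (hσ : IsCherrySystem σfam) {t u : List Bool}
    (hp : σfam t <+: σfam u) (hlt : (σfam t).length < (σfam u).length) :
    t <+: u ∧ t ≠ u := by
  have hne : t ≠ u := by rintro rfl; omega
  refine ⟨?_, hne⟩
  by_contra htu
  by_cases hut : u <+: t
  · have := sig_len_lt hσ hut (Ne.symm hne); omega
  · obtain ⟨r, a, b, hab, hr1, hr2⟩ := firstDiff t u htu hut
    have h1 : σfam (r ++ [a]) <+: σfam u := (sig_mono hσ hr1).trans hp
    have h2 : σfam (r ++ [b]) <+: σfam u := sig_mono hσ hr2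
    have hlena := len_lt_len_snoc hσ r a
    have hlenb := len_lt_len_snoc hσ r b
    have e1 : (σfam (r ++ [a])).getD (σfam r).length 0 = (σfam u).getD (σfam r).length 0 :=
      prefix_getD h1 (by omega) 0
    have e2 : (σfam (r ++ [b])).getD (σfam r).length 0 = (σfam u).getD (σfam r).length 0 :=
      prefix_getD h2 (by omega) 0
    exact snoc_val_ne hσ r hab (e1.trans e2.symm)

end CherryAux

namespace CherryAux

/-! ### Coding a branch of the restricted cherry tree by an element of `2^ω` -/

/-- the canonical code of a branch, as a list of bits -/
noncomputable def gl (σfam : List Bool → List ℕ) (φ : ℕ → ℕ) : ℕ → List Bool :=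
  fun n => Nat.rec []
    (fun _ ih => ih ++
      [@ite Bool (IsPref (σfam (ih ++ [true])) φ) (Classical.propDecidable _) true false]) n

lemma gl_succ (σfam : List Bool → List ℕ) (φ : ℕ → ℕ) (n : ℕ) :
    gl σfam φ (n + 1) = gl σfam φ n ++
      [@ite Bool (IsPref (σfam (gl σfam φ n ++ [true])) φ) (Classical.propDecidable _) true
        false] := rfl

@[simp] lemma gl_length (σfam : List Bool → List ℕ) (φ : ℕ → ℕ) (n : ℕ) :
    (gl σfam φ n).length = n := by
  induction n with
  | zero => rfl
  | succ n ih => rw [gl_succ]; simp [ih]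

variable {σfam : List Bool → List ℕ} {f : ℕ → Bool} {φ : ℕ → ℕ}

lemma cod_base (hσ : IsCherrySystem σfam)
    (hmem : ∀ n, seg φ n ∈ cherryRestrict σfam f) : IsPref (σfam []) φ := by
  obtain ⟨u, hadm, hpre⟩ := hmem (σfam []).length
  have h1 : σfam [] <+: σfam u := sig_mono hσ (List.nil_prefix)
  have h2 : σfam [] <+: seg φ (σfam []).length :=
    List.prefix_of_prefix_length_le h1 hpre (by simp)
  have h3 : σfam [] = seg φ (σfam []).length := h2.eq_of_length (by simp)
  rw [h3]; exact seg_isPref _ _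

lemma cod_ex (hσ : IsCherrySystem σfam)
    (hmem : ∀ n, seg φ n ∈ cherryRestrict σfam f) (t : List Bool)
    (ht : IsPref (σfam t) φ) :
    ∃ b, IsPref (σfam (t ++ [b])) φ ∧ (Even t.length → b = f t.length) := by
  set m := (σfam (t ++ [false])).length + (σfam (t ++ [true])).length with hm
  obtain ⟨u, hadm, hpre⟩ := hmem m
  have hmu : m ≤ (σfam u).length := by have := hpre.length_le; simpa using this
  have htlt : (σfam t).length < m := by
    have := len_lt_len_snoc hσ t false; have := len_lt_len_snoc hσ t true; omega
  have htu : σfam t <+: σfam u := by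
    have h0 : σfam t = seg φ (σfam t).length := pref_eq_seg ht
    calc σfam t = seg φ (σfam t).length := h0
    _ <+: seg φ m := seg_prefix φ htlt.le
    _ <+: σfam u := hpre
  obtain ⟨htuP, htune⟩ := index_prefix hσ htu (by omega)
  have hlen : t.length < u.length := by
    rcases lt_or_eq_of_le htuP.length_le with h | h
    · exact h
    · exact absurd (htuP.eq_of_length h) htune
  set b := u.getD t.length false with hb
  have hsnoc : t ++ [b] <+: u := prefix_snoc_getD false htuP hlen
  have h1 : σfam (t ++ [b]) <+: σfam u := sig_mono hσ hsnoc
  have hlen2 : (σfam (t ++ [b])).length ≤ m := by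
    rcases b with _ | _ <;> omega
  have h2 : σfam (t ++ [b]) <+: seg φ m :=
    List.prefix_of_prefix_length_le h1 hpre (by simpa using hlen2)
  have h3 : σfam (t ++ [b]) = seg φ (σfam (t ++ [b])).length := eq_seg_of_prefix_seg h2
  refine ⟨b, by rw [h3]; exact seg_isPref _ _, fun hev => ?_⟩
  exact hadm t.length hlen hev

lemma not_both_pref (hσ : IsCherrySystem σfam) (t : List Bool)
    (h0 : IsPref (σfam (t ++ [false])) φ) (h1 : IsPref (σfam (t ++ [true])) φ) : False := by
  have p0 := h0 (σfam t).length (len_lt_len_snoc hσ t false)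
  have p1 := h1 (σfam t).length (len_lt_len_snoc hσ t true)
  exact snoc_val_ne hσ t (by simp) (p0.trans p1.symm)

lemma gl_spec (hσ : IsCherrySystem σfam)
    (hmem : ∀ n, seg φ n ∈ cherryRestrict σfam f) (n : ℕ) :
    IsPref (σfam (gl σfam φ n)) φ ∧
      (∀ i, i < n → Even i → (gl σfam φ n).getD i false = f i) := by
  induction n with
  | zero => exact ⟨cod_base hσ hmem, by omega⟩
  | succ n ih =>
    obtain ⟨b, hbp, hbe⟩ := cod_ex hσ hmem (gl σfam φ n) ih.1
    have hbit : gl σfam φ (n + 1) = gl σfam φ n ++ [b] := by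
      rw [gl_succ]
      rcases b with _ | _
      · have : ¬ IsPref (σfam (gl σfam φ n ++ [true])) φ := fun h =>
          not_both_pref hσ (gl σfam φ n) hbp h
        simp [this]
      · simp [hbp]
    constructor
    · rw [hbit]; exact hbp
    · intro i hi hev
      rw [hbit]
      rcases lt_or_eq_of_le (Nat.lt_succ_iff.1 hi) with h | h
      · rw [List.getD_append _ _ _ _ (by simpa using h)]
        exact ih.2 i h hev
      · subst h
        have hg := getD_snoc_length (gl σfam φ i) b false
        rw [gl_length] at hg
        rw [hg]
        rw [gl_length] at hbe
        exact hbe hev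

/-- every branch of the restricted cherry tree has a code -/
lemma exists_code (hσ : IsCherrySystem σfam)
    (hmem : ∀ n, seg φ n ∈ cherryRestrict σfam f) :
    ∃ g : ℕ → Bool, (∀ i, Even i → g i = f i) ∧ ∀ n, IsPref (σfam (restr g n)) φ := by
  refine ⟨fun n => (gl σfam φ (n + 1)).getD n false, ?_, ?_⟩
  · intro i hev
    exact (gl_spec hσ hmem (i + 1)).2 i (by omega) hev
  · intro n
    have hgr : ∀ n, restr (fun j => (gl σfam φ (j + 1)).getD j false) n = gl σfam φ n := by
      intro n
      induction n with
      | zero => rfl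
      | succ n ih =>
        rw [restr_succ, ih]
        obtain ⟨b, hbp, -⟩ := cod_ex hσ hmem (gl σfam φ n) (gl_spec hσ hmem n).1
        have hbit : gl σfam φ (n + 1) = gl σfam φ n ++ [b] := by
          rw [gl_succ]
          rcases b with _ | _
          · have : ¬ IsPref (σfam (gl σfam φ n ++ [true])) φ := fun h =>
              not_both_pref hσ (gl σfam φ n) hbp h
            simp [this]
          · simp [hbp]
        have hg := getD_snoc_length (gl σfam φ n) b false
        rw [gl_length] at hg
        rw [hbit, hg]
    rw [hgr n]
    exact (gl_spec hσ hmem n).1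

/-- the branch is determined by any code -/
lemma code_unique (hσ : IsCherrySystem σfam) {g : ℕ → Bool} {ψ : ℕ → ℕ}
    (hgφ : ∀ n, IsPref (σfam (restr g n)) φ) (hgψ : ∀ n, IsPref (σfam (restr g n)) ψ) :
    φ = ψ := by
  funext k
  have hlen := sig_restr_len_ge hσ g (k + 1)
  have h1 := hgφ (k + 1) k (by omega)
  have h2 := hgψ (k + 1) k (by omega)
  omega

end CherryAux

namespace CherryAux

/-! ### The key consequence of type `⟨2,2⟩` -/

/-- If two branches of a tree `S` of type `⟨2,2⟩` pass through distinct nodes at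
level `L` and the node of `φ` is a splitting node of `S`, then `ψ L < φ L`. -/
lemma split_lt {S : Set (List ℕ)} (hS : IsTypeTree S 2 2) {φ ψ : ℕ → ℕ}
    (hφ : ∀ n, seg φ n ∈ S) (hψ : ∀ n, seg ψ n ∈ S) {L : ℕ}
    (hne : seg φ L ≠ seg ψ L) (hsplit : IsSplit S (seg φ L)) : ψ L < φ L := by
  have hnp1 : ¬ seg φ L <+: seg ψ L := fun h => hne (h.eq_of_length (by simp))
  have hnp2 : ¬ seg ψ L <+: seg φ L := fun h => hne (h.eq_of_length (by simp)).symm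
  obtain ⟨r, a, b, hab, h1, h2⟩ := firstDiff _ _ hnp1 hnp2
  have e1 : r ++ [a] = seg φ (r.length + 1) := by
    have h := eq_seg_of_prefix_seg h1; simpa using h
  have e2 : r ++ [b] = seg ψ (r.length + 1) := by
    have h := eq_seg_of_prefix_seg h2; simpa using h
  have haS : r ++ [a] ∈ S := by rw [e1]; exact hφ _
  have hbS : r ++ [b] ∈ S := by rw [e2]; exact hψ _
  have e1' := e1
  rw [seg_succ] at e1'
  obtain ⟨hr1, -⟩ := List.append_inj e1' (by simp)
  have hrS : r ∈ S := by rw [hr1]; exact hφ r.length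
  have hsplitr : IsSplit S r := ⟨hrS, a, b, hab, haS, hbS⟩
  obtain ⟨p₀, p₁, hp01, hsucc⟩ := hS.2.2.1 r hsplitr
  have hamem : a ∈ succs S r := haS
  have hbmem : b ∈ succs S r := hbS
  rw [hsucc] at hamem hbmem
  simp only [Set.mem_insert_iff, Set.mem_singleton_iff] at hamem hbmem
  have hclause := hS.2.2.2 r p₀ p₁ hsplitr hp01 hsucc (seg φ L) (seg ψ L) hsplit (hψ L)
    (by simp)
  have hR : Rrel S 2 (seg φ L) (seg ψ L) := by
    rcases hamem with rfl | rfl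
    · rcases hbmem with rfl | rfl
      · exact absurd rfl hab
      · exact hclause.1 h1 h2
    · rcases hbmem with rfl | rfl
      · exact hclause.2 h1 h2
      · exact absurd rfl hab
  obtain ⟨m₀, m₁, c, hm, hsρ, hsτ, hd⟩ := hR
  have hc : c < m₀ := by rcases hd with ⟨h, -⟩ | ⟨h, -⟩ | ⟨-, h⟩ <;> omega
  have hφL : φ L ∈ succs S (seg φ L) := by
    show seg φ L ++ [φ L] ∈ S
    rw [← seg_succ]; exact hφ _
  have hψL : ψ L ∈ succs S (seg ψ L) := by
    show seg ψ L ++ [ψ L] ∈ S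
    rw [← seg_succ]; exact hψ _
  rw [hsρ] at hφL
  rw [hsτ] at hψL
  simp only [Set.mem_insert_iff, Set.mem_singleton_iff] at hφL hψL
  rcases hφL with h | h <;> omega

end CherryAux

namespace CherryAux

/-- The core lemma: if `φ` and `ψ` are branches of `C(Σ_f) ∩ S` whose codes first
differ at `k`, with `g k = false`, then `φ` cannot be a limit of other branches. -/
lemma core (σfam : List Bool → List ℕ) (hσ : IsCherrySystem σfam)
    {S : Set (List ℕ)} (hS : IsTypeTree S 2 2) (f : ℕ → Bool)
    {φ ψ : ℕ → ℕ} {g h : ℕ → Bool}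
    (hφ : φ ∈ branches (cherryRestrict σfam f ∩ S))
    (hψ : ψ ∈ branches (cherryRestrict σfam f ∩ S))
    (hgf : ∀ i, Even i → g i = f i) (hgp : ∀ n, IsPref (σfam (restr g n)) φ)
    (hhf : ∀ i, Even i → h i = f i) (hhp : ∀ n, IsPref (σfam (restr h n)) ψ)
    {k : ℕ} (hkg : g k = false) (hkh : h k = true) (hagree : ∀ j, j < k → g j = h j)
    (hP : ∀ n, ∃ χ, χ ∈ branches (cherryRestrict σfam f ∩ S) ∧ χ ≠ φ ∧
      seg χ n = seg φ n) : False := by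
  have hφS : ∀ n, seg φ n ∈ S := fun n => (hφ.2 n).2
  have hψS : ∀ n, seg ψ n ∈ S := fun n => (hψ.2 n).2
  -- a nearby branch φ' ≠ φ agreeing with φ on a long segment
  obtain ⟨φ', hφ'B, hφ'ne, hφ'seg⟩ := hP ((σfam (restr g (k + 1))).length + 1)
  set n₀ := (σfam (restr g (k + 1))).length + 1 with hn₀
  have hφ'S : ∀ n, seg φ' n ∈ S := fun n => (hφ'B.2 n).2
  obtain ⟨g', hg'f, hg'p⟩ := exists_code hσ (fun n => (hφ'B.2 n).1)
  have hgg' : g ≠ g' := by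
    rintro rfl
    exact hφ'ne (code_unique hσ hg'p hgp)
  have hex : ∃ j, g j ≠ g' j := Function.ne_iff.1 hgg'
  set m := Nat.find hex with hmdef
  have hm : g m ≠ g' m := Nat.find_spec hex
  have hmag : ∀ j, j < m → g j = g' j := fun j hj => not_not.1 (Nat.find_min hex hj)
  -- the codes g and g' agree up to k (so m > k)
  have hkm : k < m := by
    by_contra hle
    push_neg at hle
    set p' := (σfam (restr g m)).length with hp'
    have hrm : restr g' m = restr g m := restr_eq_of_agree (fun j hj => (hmag j hj).symm)
    have hl1 : p' < (σfam (restr g (m + 1))).length :=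
      sig_restr_len_mono hσ g (by omega)
    have h1 : φ p' = (σfam (restr g (m + 1))).getD p' 0 := (hgp (m + 1) p' hl1).symm
    have hl2 : p' < (σfam (restr g' (m + 1))).length := by
      rw [restr_succ, hrm]
      exact len_lt_len_snoc hσ _ _
    have h2 : φ' p' = (σfam (restr g' (m + 1))).getD p' 0 := (hg'p (m + 1) p' hl2).symm
    rw [restr_succ] at h1
    rw [restr_succ, hrm] at h2
    have hvne : (σfam (restr g m ++ [g m])).getD p' 0 ≠
        (σfam (restr g m ++ [g' m])).getD p' 0 := snoc_val_ne hσ _ hm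
    have hp'lt : p' < n₀ := by
      have hle2 : p' ≤ (σfam (restr g k)).length := by
        rcases lt_or_eq_of_le hle with hlt | heq
        · exact (sig_restr_len_mono hσ g hlt).le
        · rw [hp', heq]
      have := sig_restr_len_mono hσ g (show k < k + 1 by omega)
      omega
    have hsame : φ p' = φ' p' := by
      have := congrArg (fun l => l.getD p' 0) hφ'seg
      rw [seg_getD φ' hp'lt, seg_getD φ hp'lt] at this
      exact this.symm
    rw [h1, h2] at hsame
    exact hvne hsame
  -- parities: k and m are both odd, so m = k + 2N with N ≥ 1
  have hkodd : ¬ Even k := by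
    intro hev
    rw [hgf k hev] at hkg
    rw [hhf k hev] at hkh
    rw [hkg] at hkh
    exact Bool.false_ne_true hkh
  have hmodd : ¬ Even m := by
    intro hev
    exact hm ((hgf m hev).trans (hg'f m hev).symm)
  obtain ⟨N, hmN⟩ : ∃ N, m = k + 2 * N := by
    rcases Nat.odd_iff.1 (Nat.not_even_iff_odd.1 hkodd) with hk2
    rcases Nat.odd_iff.1 (Nat.not_even_iff_odd.1 hmodd) with hm2
    exact ⟨(m - k) / 2, by omega⟩
  -- the splitting node σfam t at level L
  set t := restr g m with htdef
  have hrt : restr g' m = t := restr_eq_of_agree (fun j hj => (hmag j hj).symm)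
  set L := (σfam t).length with hLdef
  have hLφ : seg φ L = σfam t := (pref_eq_seg (hgp m)).symm
  have hLφ' : seg φ' L = σfam t := by
    have := (pref_eq_seg (hg'p m)).symm
    rwa [hrt] at this
  have hl3 : L < (σfam (restr g (m + 1))).length := sig_restr_len_mono hσ g (by omega)
  have hvφ : φ L = (σfam (t ++ [g m])).getD L 0 := by
    have := (hgp (m + 1) L hl3).symm
    rwa [restr_succ] at this
  have hl4 : L < (σfam (restr g' (m + 1))).length := by
    rw [restr_succ, hrt]
    exact len_lt_len_snoc hσ _ _
  have hvφ' : φ' L = (σfam (t ++ [g' m])).getD L 0 := by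
    have := (hg'p (m + 1) L hl4).symm
    rwa [restr_succ, hrt] at this
  have hφφ'ne : φ L ≠ φ' L := by
    rw [hvφ, hvφ']
    exact snoc_val_ne hσ t hm
  have hsplit : IsSplit S (seg φ L) := by
    refine ⟨hφS L, φ L, φ' L, hφφ'ne, ?_, ?_⟩
    · rw [← seg_succ]; exact hφS _
    · rw [hLφ, ← hLφ', ← seg_succ]; exact hφ'S _
  -- the nodes of φ and ψ at level L are distinct
  have hpk : (σfam (restr g k)).length < L := sig_restr_len_mono hσ g hkm
  set p := (σfam (restr g k)).length with hpdef
  have hφp : φ p = (σfam (restr g k ++ [false])).getD p 0 := by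
    have hl5 : p < (σfam (restr g (k + 1))).length :=
      sig_restr_len_mono hσ g (by omega)
    have := (hgp (k + 1) p hl5).symm
    rwa [restr_succ, hkg] at this
  have hψp : ψ p = (σfam (restr g k ++ [true])).getD p 0 := by
    have hl6 : p < (σfam (restr h (k + 1))).length := by
      rw [restr_succ, restr_eq_of_agree (fun j hj => (hagree j hj).symm)]
      exact len_lt_len_snoc hσ _ _
    have := (hhp (k + 1) p hl6).symm
    rwa [restr_succ, hkh, restr_eq_of_agree (fun j hj => (hagree j hj).symm)] at this
  have hφψp : φ p < ψ p := by
    rw [hφp, hψp]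
    exact hσ.2.2.1 (restr g k)
  have hsegne : seg φ L ≠ seg ψ L := by
    intro heq
    have := congrArg (fun l => l.getD p 0) heq
    rw [seg_getD φ hpk, seg_getD ψ hpk] at this
    omega
  -- type ⟨2,2⟩ gives ψ L < φ L
  have hlt1 : ψ L < φ L := split_lt hS hφS hψS hsegne hsplit
  -- condition (III) gives φ L < ψ L
  have h3 := hσ.2.2.2 (restr g k) g h φ ψ ?_ ?_ ?_ ?_ N
  · have hlen : (restr g k).length = k := restr_length g k
    rw [hlen] at h3
    have h4 := h3.1
    rw [← hmN, ← htdef, ← hLdef] at h4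
    omega
  · rw [restr_length, restr_succ, hkg]
  · rw [restr_length, restr_succ, hkh, restr_eq_of_agree (fun j hj => (hagree j hj).symm)]
  · exact fun n k hk => (hgp n k hk).symm
  · exact fun n k hk => (hhp n k hk).symm

end CherryAux

/-- **Lemma 7.** If `S` is a Sacks tree of type `⟨2,2⟩`, `C(Σ)` is a cherry tree and
`f : E → 2` (with `E` the even numbers), then `[C(Σ_f) ∩ S]` is countable. -/
theorem cherry_restrict_meets_sacks_countably
    (σfam : List Bool → List ℕ) (hσ : IsCherrySystem σfam)
    (S : Set (List ℕ)) (hS : IsTypeTree S 2 2) (f : ℕ → Bool) :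
    Set.Countable (branches (cherryRestrict σfam f ∩ S)) := by
  classical
  set B := branches (cherryRestrict σfam f ∩ S) with hB
  -- any two "limit" branches coincide
  have key : ∀ φ, φ ∈ B → ∀ ψ, ψ ∈ B →
      (∀ n, ∃ χ, χ ∈ B ∧ χ ≠ φ ∧ seg χ n = seg φ n) →
      (∀ n, ∃ χ, χ ∈ B ∧ χ ≠ ψ ∧ seg χ n = seg ψ n) → φ = ψ := by
    intro φ hφ ψ hψ hPφ hPψ
    by_contra hne
    obtain ⟨g, hgf, hgp⟩ := CherryAux.exists_code hσ (fun n => (hφ.2 n).1)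
    obtain ⟨h, hhf, hhp⟩ := CherryAux.exists_code hσ (fun n => (hψ.2 n).1)
    have hgh : g ≠ h := by
      rintro rfl
      exact hne (CherryAux.code_unique hσ hgp hhp)
    have hex : ∃ j, g j ≠ h j := Function.ne_iff.1 hgh
    set k := Nat.find hex with hkdef
    have hk : g k ≠ h k := Nat.find_spec hex
    have hag : ∀ j, j < k → g j = h j := fun j hj => not_not.1 (Nat.find_min hex hj)
    cases hc : g k with
    | false =>
      have hck : h k = true := by
        revert hk; rw [hc]; cases h k <;> simp
      exact CherryAux.core σfam hσ hS f hφ hψ hgf hgp hhf hhp hc hck hag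
        (fun n => by obtain ⟨χ, h1, h2, h3⟩ := hPφ n; exact ⟨χ, h1, h2, h3⟩)
    | true =>
      have hck : h k = false := by
        revert hk; rw [hc]; cases h k <;> simp
      exact CherryAux.core σfam hσ hS f hψ hφ hhf hhp hgf hgp hck hc
        (fun j hj => (hag j hj).symm)
        (fun n => by obtain ⟨χ, h1, h2, h3⟩ := hPψ n; exact ⟨χ, h1, h2, h3⟩)
  -- split B into the (at most one) limit branch and the isolated branches
  have hsub : B ⊆ {φ | φ ∈ B ∧ ∀ n, ∃ χ, χ ∈ B ∧ χ ≠ φ ∧ seg χ n = seg φ n} ∪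
      ⋃ σ : List ℕ,
        {φ | φ ∈ B ∧ seg φ σ.length = σ ∧ ∀ ψ, ψ ∈ B → seg ψ σ.length = σ → ψ = φ} := by
    intro φ hφ
    by_cases hp : ∀ n, ∃ χ, χ ∈ B ∧ χ ≠ φ ∧ seg χ n = seg φ n
    · exact Or.inl ⟨hφ, hp⟩
    · push_neg at hp
      obtain ⟨n, hn⟩ := hp
      refine Or.inr (Set.mem_iUnion.2 ⟨seg φ n, hφ, by simp, ?_⟩)
      intro ψ hψ hseg
      by_contra hne
      exact hn ψ hψ hne (by simpa using hseg)
  refine Set.Countable.mono hsub (Set.Countable.union ?_ (Set.countable_iUnion ?_))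
  · refine Set.Subsingleton.countable ?_
    intro a ha b hb
    exact key a ha.1 b hb.1 ha.2 hb.2
  · intro σ
    refine Set.Subsingleton.countable ?_
    intro a ha b hb
    exact (hb.2.2 a ha.1 ha.2.1).symm ▸ rfl
end

section
/- If M is a mango tree and 𝒮 is a family of fewer than 𝔠 (the cardinality of the continuum) Sacks trees, each of which is of type ⟨i,j⟩ for some ⟨i,j⟩ ∈ 3 × 3, then |[M] \ ⋃_{S ∈ 𝒮} [S]| = 𝔠. -/
/-- `φ = ⋃_n σ2 (f↾n) (g↾n)`. -/
def IsUnionOf2 (σ2 : List Bool → List Bool → List ℕ) (f g : ℕ → Bool) (φ : ℕ → ℕ) :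
    Prop :=
  ∀ n k, k < (σ2 (restr f n) (restr g n)).length →
    φ k = (σ2 (restr f n) (restr g n)).getD k 0

/-- The system `⟨σ_{⟨s,t⟩} : s, t ∈ 2^{<ω}, |s| = |t|⟩` determines a mango tree;
conditions (I)–(III). -/
def IsMangoSystem (σ2 : List Bool → List Bool → List ℕ) : Prop :=
  (∀ s t : List Bool, s.length = t.length → IncSeq (σ2 s t)) ∧
  -- (I)
  (∀ s t s' t' : List Bool, s.length = t.length → s'.length = t'.length →
    s <+: s' → s ≠ s' → t <+: t' → t ≠ t' →
    σ2 s t <+: σ2 s' t' ∧ σ2 s t ≠ σ2 s' t') ∧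
  -- (II): every vertical section is a cherry system
  (∀ f : ℕ → Bool, IsCherrySystem (fun t => σ2 (restr f t.length) t)) ∧
  -- (III)
  (∀ (s : List Bool) (f₀ f₁ g₀ g₁ : ℕ → Bool) (φ₀ φ₁ : ℕ → ℕ),
    restr f₀ (s.length + 1) = s ++ [false] →
    restr f₁ (s.length + 1) = s ++ [true] →
    IsUnionOf2 σ2 f₀ g₀ φ₀ → IsUnionOf2 σ2 f₁ g₁ φ₁ →
    (∀ n : ℕ, n > s.length →
      φ₀ ((σ2 (restr f₀ n) (restr g₀ n)).length) >
        φ₁ ((σ2 (restr f₀ n) (restr g₀ n)).length) ∧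
      φ₁ ((σ2 (restr f₁ n) (restr g₁ n)).length) >
        φ₀ ((σ2 (restr f₁ n) (restr g₁ n)).length)) ∧
    φ₁ ((σ2 s (restr g₁ s.length)).length) > φ₀ ((σ2 s (restr g₁ s.length)).length))

/-- The mango tree `M(Σ)`: all initial segments of the `σ_{⟨s,t⟩}`. -/
def mangoTree (σ2 : List Bool → List Bool → List ℕ) : Set (List ℕ) :=
  {ρ | ∃ s t : List Bool, s.length = t.length ∧ ρ <+: σ2 s t}

/-- The vertical section `M^f = {σ_{⟨f↾i,t⟩}↾n : i, n ∈ ω, t ∈ 2^i}` of a mango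
tree. -/
def mangoSection (σ2 : List Bool → List Bool → List ℕ) (f : ℕ → Bool) :
    Set (List ℕ) :=
  {ρ | ∃ t : List Bool, ρ <+: σ2 (restr f t.length) t}

/- ===================== Auxiliary development ===================== -/

section MangoAux

open Cardinal

/-! ### Generic lemmas about `restr` and `seg` -/

lemma restr_length (f : ℕ → Bool) (n : ℕ) : (restr f n).length = n := by
  simp [restr]

lemma seg_length (f : ℕ → ℕ) (n : ℕ) : (seg f n).length = n := by
  simp [seg]

lemma restr_succ (f : ℕ → Bool) (n : ℕ) : restr f (n + 1) = restr f n ++ [f n] := by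
  simp [restr, List.range_succ]

lemma seg_succ (f : ℕ → ℕ) (n : ℕ) : seg f (n + 1) = seg f n ++ [f n] := by
  simp [seg, List.range_succ]

lemma restr_getElem (f : ℕ → Bool) {n k : ℕ} (h : k < n) :
    (restr f n)[k]'(by simpa [restr_length] using h) = f k := by
  simp [restr]

lemma seg_getElem (f : ℕ → ℕ) {n k : ℕ} (h : k < n) :
    (seg f n)[k]'(by simpa [seg_length] using h) = f k := by
  simp [seg]

lemma restr_take (f : ℕ → Bool) {m n : ℕ} (h : m ≤ n) :
    (restr f n).take m = restr f m := by
  rw [restr, restr, ← List.map_take, List.take_range, min_eq_left h]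

lemma seg_take (f : ℕ → ℕ) {m n : ℕ} (h : m ≤ n) :
    (seg f n).take m = seg f m := by
  rw [seg, seg, ← List.map_take, List.take_range, min_eq_left h]

lemma restr_prefix (f : ℕ → Bool) {m n : ℕ} (h : m ≤ n) :
    restr f m <+: restr f n := by
  rw [← restr_take f h]; exact List.take_prefix _ _

lemma seg_prefix (f : ℕ → ℕ) {m n : ℕ} (h : m ≤ n) :
    seg f m <+: seg f n := by
  rw [← seg_take f h]; exact List.take_prefix _ _

lemma restr_congr {f g : ℕ → Bool} {n : ℕ} (h : ∀ k < n, f k = g k) :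
    restr f n = restr g n := by
  apply List.ext_getElem (by simp [restr_length])
  intro k h1 h2
  rw [restr_getElem f (by simpa [restr_length] using h1),
    restr_getElem g (by simpa [restr_length] using h2)]
  exact h k (by simpa [restr_length] using h1)

lemma seg_congr {f g : ℕ → ℕ} {n : ℕ} (h : ∀ k < n, f k = g k) :
    seg f n = seg g n := by
  apply List.ext_getElem (by simp [seg_length])
  intro k h1 h2
  rw [seg_getElem f (by simpa [seg_length] using h1),
    seg_getElem g (by simpa [seg_length] using h2)]
  exact h k (by simpa [seg_length] using h1)

lemma eq_of_restr_eq {f g : ℕ → Bool} {n : ℕ} (h : restr f n = restr g n)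
    {k : ℕ} (hk : k < n) : f k = g k := by
  have := congrArg (fun l => l.getD k true) h
  simpa [restr, List.getD_eq_getElem, hk] using this

lemma prefix_ne_length_lt {α : Type*} {u v : List α} (h : u <+: v) (hne : u ≠ v) :
    u.length < v.length := by
  rcases lt_or_eq_of_le h.length_le with h' | h'
  · exact h'
  · exact absurd (List.IsPrefix.eq_of_length h h') hne

lemma prefix_getElem {α : Type*} {u v : List α} (h : u <+: v) {k : ℕ}
    (hk : k < u.length) :
    v[k]'(lt_of_lt_of_le hk h.length_le) = u[k] := by
  obtain ⟨w, rfl⟩ := h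
  exact List.getElem_append_left hk

lemma restr_of_prefix {g : ℕ → Bool} {u : List Bool} {N : ℕ}
    (h : u <+: restr g N) : restr g u.length = u := by
  have hle : u.length ≤ N := by
    have := h.length_le; rwa [restr_length] at this
  rw [← restr_take g hle]
  exact (List.prefix_iff_eq_take.mp h).symm

lemma seg_eq_of_agree {φ : ℕ → ℕ} {l : List ℕ}
    (h : ∀ (k : ℕ) (hk : k < l.length), φ k = l[k]) : seg φ l.length = l := by
  apply List.ext_getElem (by simp [seg_length])
  intro k h1 h2
  rw [seg_getElem φ (by simpa [seg_length] using h1)]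
  exact h k h2

end MangoAux


section MangoAux2

variable {σ2 : List Bool → List Bool → List ℕ}

/-- The node of the mango system at depth `n` along `(f, g)`. -/
def nd (σ2 : List Bool → List Bool → List ℕ) (f g : ℕ → Bool) (n : ℕ) : List ℕ :=
  σ2 (restr f n) (restr g n)

lemma nd_prefix (hσ2 : IsMangoSystem σ2) (f g : ℕ → Bool) {m n : ℕ} (h : m ≤ n) :
    nd σ2 f g m <+: nd σ2 f g n := by
  rcases eq_or_lt_of_le h with rfl | hlt
  · exact List.prefix_refl _
  · refine (hσ2.2.1 (restr f m) (restr g m) (restr f n) (restr g n)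
      (by simp [restr_length]) (by simp [restr_length])
      (restr_prefix f h) ?_ (restr_prefix g h) ?_).1 <;>
    · intro he
      have := congrArg List.length he
      simp only [restr_length] at this
      omega

lemma nd_len_lt (hσ2 : IsMangoSystem σ2) (f g : ℕ → Bool) {m n : ℕ} (h : m < n) :
    (nd σ2 f g m).length < (nd σ2 f g n).length := by
  have hne : restr f m ≠ restr f n := by
    intro he
    have := congrArg List.length he
    simp only [restr_length] at this
    omega
  have := hσ2.2.1 (restr f m) (restr g m) (restr f n) (restr g n)
      (by simp [restr_length]) (by simp [restr_length])
      (restr_prefix f h.le) hne (restr_prefix g h.le) (by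
        intro he
        have := congrArg List.length he
        simp only [restr_length] at this
        omega)
  exact prefix_ne_length_lt this.1 this.2

lemma nd_len_ge (hσ2 : IsMangoSystem σ2) (f g : ℕ → Bool) (n : ℕ) :
    n ≤ (nd σ2 f g n).length := by
  induction n with
  | zero => omega
  | succ k ih =>
    have h := nd_len_lt hσ2 f g (show k < k + 1 by omega)
    omega

/-- The canonical mango branch along `(f, g)`. -/
def mb (σ2 : List Bool → List Bool → List ℕ) (f g : ℕ → Bool) : ℕ → ℕ :=
  fun k => (nd σ2 f g (k + 1)).getD k 0

lemma mb_eq (hσ2 : IsMangoSystem σ2) (f g : ℕ → Bool) {n k : ℕ}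
    (h : k < (nd σ2 f g n).length) :
    mb σ2 f g k = (nd σ2 f g n)[k] := by
  have hk1 : k < (nd σ2 f g (k + 1)).length :=
    lt_of_lt_of_le (Nat.lt_succ_self k) (nd_len_ge hσ2 f g (k + 1))
  show (nd σ2 f g (k + 1)).getD k 0 = _
  rw [List.getD_eq_getElem _ 0 hk1]
  rcases le_total n (k + 1) with h' | h'
  · exact prefix_getElem (nd_prefix hσ2 f g h') h
  · exact (prefix_getElem (nd_prefix hσ2 f g h') hk1).symm

lemma mb_strictMono (hσ2 : IsMangoSystem σ2) (f g : ℕ → Bool) :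
    StrictMono (mb σ2 f g) := by
  apply strictMono_nat_of_lt_succ
  intro k
  have hlen : k + 2 ≤ (nd σ2 f g (k + 2)).length := nd_len_ge hσ2 f g (k + 2)
  have h1 : k < (nd σ2 f g (k + 2)).length := by omega
  have h2 : k + 1 < (nd σ2 f g (k + 2)).length := by omega
  rw [mb_eq hσ2 f g h1, mb_eq hσ2 f g h2]
  have hinc : IncSeq (nd σ2 f g (k + 2)) :=
    hσ2.1 (restr f (k + 2)) (restr g (k + 2)) (by simp [restr_length])
  have := List.isChain_iff_getElem.mp hinc k (by omega)
  simpa [List.get_eq_getElem] using this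

lemma isUnionOf2_mb (hσ2 : IsMangoSystem σ2) (f g : ℕ → Bool) :
    IsUnionOf2 σ2 f g (mb σ2 f g) := by
  intro n k hk
  exact (mb_eq hσ2 f g hk).trans (List.getD_eq_getElem _ 0 hk).symm

lemma seg_mb_take (hσ2 : IsMangoSystem σ2) (f g : ℕ → Bool) (n : ℕ) :
    seg (mb σ2 f g) n = (nd σ2 f g n).take n := by
  apply List.ext_getElem
  · simp [seg_length, nd_len_ge hσ2 f g n]
  · intro k h1 h2
    have hk : k < n := by simpa [seg_length] using h1
    have hk' : k < (nd σ2 f g n).length := lt_of_lt_of_le hk (nd_len_ge hσ2 f g n)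
    rw [seg_getElem _ hk, List.getElem_take]
    exact mb_eq hσ2 f g hk'

lemma mb_branch (hσ2 : IsMangoSystem σ2) (f g : ℕ → Bool) :
    mb σ2 f g ∈ branches (mangoTree σ2) := by
  refine ⟨mb_strictMono hσ2 f g, fun n => ?_⟩
  refine ⟨restr f n, restr g n, by simp [restr_length], ?_⟩
  rw [seg_mb_take hσ2 f g n]
  exact List.take_prefix _ _

lemma seg_mb_node (hσ2 : IsMangoSystem σ2) (f g : ℕ → Bool) {n : ℕ} {t : List Bool}
    (hg : restr g n = t) :
    seg (mb σ2 f g) ((σ2 (restr f n) t).length) = σ2 (restr f n) t := by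
  subst hg
  apply seg_eq_of_agree
  intro k hk
  exact mb_eq hσ2 f g hk

/-! ### Cherry sections -/

/-- The cherry system of the section of `σ2` at `f`. -/
abbrev σf (σ2 : List Bool → List Bool → List ℕ) (f : ℕ → Bool) :
    List Bool → List ℕ :=
  fun t => σ2 (restr f t.length) t

lemma cherry_section (hσ2 : IsMangoSystem σ2) (f : ℕ → Bool) :
    IsCherrySystem (σf σ2 f) := hσ2.2.2.1 f

lemma σf_restr (f g : ℕ → Bool) (n : ℕ) : σf σ2 f (restr g n) = nd σ2 f g n := by
  unfold σf nd
  rw [restr_length]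

lemma σf_len_lt (hσ2 : IsMangoSystem σ2) (f : ℕ → Bool) {u v : List Bool}
    (h : u <+: v) (hne : u ≠ v) : (σf σ2 f u).length < (σf σ2 f v).length := by
  have := (cherry_section hσ2 f).2.1 u v h hne
  exact prefix_ne_length_lt this.1 this.2

lemma σf_len_le (hσ2 : IsMangoSystem σ2) (f : ℕ → Bool) {u v : List Bool}
    (h : u <+: v) : (σf σ2 f u).length ≤ (σf σ2 f v).length := by
  rcases eq_or_ne u v with rfl | hne
  · exact le_refl _
  · exact (σf_len_lt hσ2 f h hne).le

lemma isUnionOf_mb (hσ2 : IsMangoSystem σ2) (f g : ℕ → Bool) :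
    IsUnionOf (σf σ2 f) g (mb σ2 f g) := by
  intro n k hk
  rw [σf_restr] at hk ⊢
  rw [mb_eq hσ2 f g hk, List.getD_eq_getElem _ 0 hk]

lemma value_at (hσ2 : IsMangoSystem σ2) (f g : ℕ → Bool) {y : List Bool} {b : Bool}
    (hg : restr g (y.length + 1) = y ++ [b]) :
    mb σ2 f g ((σf σ2 f y).length) =
      (σf σ2 f (y ++ [b])).getD ((σf σ2 f y).length) 0 := by
  have hnode : nd σ2 f g (y.length + 1) = σf σ2 f (y ++ [b]) := by
    have hlen : (y ++ [b]).length = y.length + 1 := by simp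
    unfold nd σf
    rw [hg, hlen]
  have hlt : (σf σ2 f y).length < (σf σ2 f (y ++ [b])).length :=
    σf_len_lt hσ2 f (List.prefix_append y [b]) (by simp)
  have hlt' : (σf σ2 f y).length < (nd σ2 f g (y.length + 1)).length := by
    rw [hnode]; exact hlt
  rw [mb_eq hσ2 f g hlt', List.getD_eq_getElem _ 0 (by rw [← hnode]; exact hlt')]
  exact List.getElem_of_eq hnode _

lemma lt_at (hσ2 : IsMangoSystem σ2) (f g g' : ℕ → Bool) {y : List Bool}
    (hg : restr g (y.length + 1) = y ++ [false])
    (hg' : restr g' (y.length + 1) = y ++ [true]) :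
    mb σ2 f g ((σf σ2 f y).length) < mb σ2 f g' ((σf σ2 f y).length) := by
  rw [value_at hσ2 f g hg, value_at hσ2 f g' hg']
  exact (cherry_section hσ2 f).2.2.1 y

lemma ne_at (hσ2 : IsMangoSystem σ2) (f g g' : ℕ → Bool) {e : ℕ}
    (hr : restr g' e = restr g e) (hne : g' e ≠ g e) :
    mb σ2 f g' ((σf σ2 f (restr g e)).length) ≠
      mb σ2 f g ((σf σ2 f (restr g e)).length) := by
  have hy : (restr g e).length = e := restr_length g e
  have h1 : restr g ((restr g e).length + 1) = restr g e ++ [g e] := by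
    rw [hy]; exact restr_succ g e
  have h2 : restr g' ((restr g e).length + 1) = restr g e ++ [g' e] := by
    rw [hy, restr_succ, hr]
  cases hb : g e
  · have hb' : g' e = true := by
      cases hb2 : g' e
      · rw [hb, hb2] at hne; exact absurd rfl hne
      · rfl
    rw [hb] at h1; rw [hb'] at h2
    exact (lt_at hσ2 f g g' h1 h2).ne'
  · have hb' : g' e = false := by
      cases hb2 : g' e
      · rfl
      · rw [hb, hb2] at hne; exact absurd rfl hne
    rw [hb] at h1; rw [hb'] at h2
    exact (lt_at hσ2 f g' g h2 h1).ne

lemma mb_inj_g (hσ2 : IsMangoSystem σ2) (f : ℕ → Bool) {g g' : ℕ → Bool}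
    (hne : g ≠ g') : mb σ2 f g ≠ mb σ2 f g' := by
  obtain ⟨a, ha⟩ := Function.ne_iff.mp hne
  have hex : ∃ k, g' k ≠ g k := ⟨a, Ne.symm ha⟩
  classical
  set e := Nat.find hex with he
  have hspec : g' e ≠ g e := Nat.find_spec hex
  have hmin : ∀ k < e, g' k = g k := fun k hk => by
    by_contra hc
    exact absurd (Nat.find_min hex hk) (by simp [hc])
  have hr : restr g' e = restr g e := restr_congr hmin
  intro hEq
  exact ne_at hσ2 f g g' hr hspec (by rw [hEq])

end MangoAux2


section MangoAux3

variable {σ2 : List Bool → List Bool → List ℕ}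

/-! ### Type tree lemmas -/

lemma branch_seg_mem {S : Set (List ℕ)} {φ : ℕ → ℕ} (h : φ ∈ branches S) (n : ℕ) :
    seg φ n ∈ S := h.2 n

lemma branch_succ_mem {S : Set (List ℕ)} {φ : ℕ → ℕ} (h : φ ∈ branches S) (n : ℕ) :
    seg φ n ++ [φ n] ∈ S := by
  have := h.2 (n + 1)
  rwa [seg_succ] at this

lemma type_step_i {S : Set (List ℕ)} {i j : ℕ} (hT : IsTypeTree S i j)
    {χ₀ χ₁ ψ : ℕ → ℕ}
    (h₀ : χ₀ ∈ branches S) (h₁ : χ₁ ∈ branches S) (hψ : ψ ∈ branches S)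
    {D Λ : ℕ} (hDΛ : D < Λ)
    (hagree : seg χ₀ D = seg ψ D) (hlow : χ₀ D < ψ D)
    (hagree2 : seg χ₀ Λ = seg χ₁ Λ) (hneΛ : χ₀ Λ ≠ χ₁ Λ) :
    Rrel S i (seg χ₀ Λ) (seg ψ Λ) := by
  have hσS : seg χ₀ D ∈ S := h₀.2 D
  have hs0 : seg χ₀ D ++ [χ₀ D] ∈ S := branch_succ_mem h₀ D
  have hs1 : seg χ₀ D ++ [ψ D] ∈ S := by
    rw [hagree]; exact branch_succ_mem hψ D
  have hsplitσ : IsSplit S (seg χ₀ D) := ⟨hσS, χ₀ D, ψ D, ne_of_lt hlow, hs0, hs1⟩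
  obtain ⟨n₀, n₁, h01, hsucc⟩ := hT.2.2.1 (seg χ₀ D) hsplitσ
  have hm0 : χ₀ D ∈ succs S (seg χ₀ D) := hs0
  have hm1 : ψ D ∈ succs S (seg χ₀ D) := hs1
  rw [hsucc] at hm0 hm1
  simp only [Set.mem_insert_iff, Set.mem_singleton_iff] at hm0 hm1
  have hid0 : χ₀ D = n₀ := by omega
  have hid1 : ψ D = n₁ := by omega
  have hρsplit : IsSplit S (seg χ₀ Λ) := by
    refine ⟨h₀.2 Λ, χ₀ Λ, χ₁ Λ, hneΛ, branch_succ_mem h₀ Λ, ?_⟩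
    rw [hagree2]; exact branch_succ_mem h₁ Λ
  have hpre0 : seg χ₀ D ++ [n₀] <+: seg χ₀ Λ := by
    rw [← hid0, ← seg_succ]
    exact seg_prefix χ₀ (by omega)
  have hpre1 : seg χ₀ D ++ [n₁] <+: seg ψ Λ := by
    rw [← hid1, hagree, ← seg_succ]
    exact seg_prefix ψ (by omega)
  exact (hT.2.2.2 (seg χ₀ D) n₀ n₁ hsplitσ h01 hsucc (seg χ₀ Λ) (seg ψ Λ)
    hρsplit (hψ.2 Λ) (by simp [seg_length])).1 hpre0 hpre1

lemma type_step_j {S : Set (List ℕ)} {i j : ℕ} (hT : IsTypeTree S i j)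
    {χ₀ χ₁ ψ : ℕ → ℕ}
    (h₀ : χ₀ ∈ branches S) (h₁ : χ₁ ∈ branches S) (hψ : ψ ∈ branches S)
    {D Λ : ℕ} (hDΛ : D < Λ)
    (hagree : seg χ₀ D = seg ψ D) (hhigh : ψ D < χ₀ D)
    (hagree2 : seg χ₀ Λ = seg χ₁ Λ) (hneΛ : χ₀ Λ ≠ χ₁ Λ) :
    Rrel S j (seg χ₀ Λ) (seg ψ Λ) := by
  have hσS : seg χ₀ D ∈ S := h₀.2 D
  have hs0 : seg χ₀ D ++ [χ₀ D] ∈ S := branch_succ_mem h₀ D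
  have hs1 : seg χ₀ D ++ [ψ D] ∈ S := by
    rw [hagree]; exact branch_succ_mem hψ D
  have hsplitσ : IsSplit S (seg χ₀ D) := ⟨hσS, χ₀ D, ψ D, ne_of_gt hhigh, hs0, hs1⟩
  obtain ⟨n₀, n₁, h01, hsucc⟩ := hT.2.2.1 (seg χ₀ D) hsplitσ
  have hm0 : χ₀ D ∈ succs S (seg χ₀ D) := hs0
  have hm1 : ψ D ∈ succs S (seg χ₀ D) := hs1
  rw [hsucc] at hm0 hm1
  simp only [Set.mem_insert_iff, Set.mem_singleton_iff] at hm0 hm1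
  have hid0 : χ₀ D = n₁ := by omega
  have hid1 : ψ D = n₀ := by omega
  have hρsplit : IsSplit S (seg χ₀ Λ) := by
    refine ⟨h₀.2 Λ, χ₀ Λ, χ₁ Λ, hneΛ, branch_succ_mem h₀ Λ, ?_⟩
    rw [hagree2]; exact branch_succ_mem h₁ Λ
  have hpre0 : seg χ₀ D ++ [n₁] <+: seg χ₀ Λ := by
    rw [← hid0, ← seg_succ]
    exact seg_prefix χ₀ (by omega)
  have hpre1 : seg χ₀ D ++ [n₀] <+: seg ψ Λ := by
    rw [← hid1, hagree, ← seg_succ]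
    exact seg_prefix ψ (by omega)
  exact (hT.2.2.2 (seg χ₀ D) n₀ n₁ hsplitσ h01 hsucc (seg χ₀ Λ) (seg ψ Λ)
    hρsplit (hψ.2 Λ) (by simp [seg_length])).2 hpre0 hpre1

lemma rrel_force_two {S : Set (List ℕ)} {r : ℕ} {ρ τ : List ℕ} {a b c : ℕ}
    (h : Rrel S r ρ τ)
    (ha : ρ ++ [a] ∈ S) (hb : ρ ++ [b] ∈ S) (hab : a ≠ b) (hc : τ ++ [c] ∈ S)
    (h1 : c < a) (h2 : c < b) : r = 2 := by
  obtain ⟨m₀, m₁, c', hlt, hsρ, hsτ, hdisj⟩ := h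
  have hcc : c ∈ succs S τ := hc
  rw [hsτ] at hcc
  simp only [Set.mem_singleton_iff] at hcc
  have haa : a ∈ succs S ρ := ha
  have hbb : b ∈ succs S ρ := hb
  rw [hsρ] at haa hbb
  simp only [Set.mem_insert_iff, Set.mem_singleton_iff] at haa hbb
  rcases hdisj with ⟨hr, hm⟩ | ⟨hr, hm⟩ | ⟨hr, hm⟩ <;> omega

lemma rrel_force_zero {S : Set (List ℕ)} {r : ℕ} {ρ τ : List ℕ} {a b c : ℕ}
    (h : Rrel S r ρ τ)
    (ha : ρ ++ [a] ∈ S) (hb : ρ ++ [b] ∈ S) (hab : a ≠ b) (hc : τ ++ [c] ∈ S)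
    (h1 : a < c) (h2 : b < c) : r = 0 := by
  obtain ⟨m₀, m₁, c', hlt, hsρ, hsτ, hdisj⟩ := h
  have hcc : c ∈ succs S τ := hc
  rw [hsτ] at hcc
  simp only [Set.mem_singleton_iff] at hcc
  have haa : a ∈ succs S ρ := ha
  have hbb : b ∈ succs S ρ := hb
  rw [hsρ] at haa hbb
  simp only [Set.mem_insert_iff, Set.mem_singleton_iff] at haa hbb
  rcases hdisj with ⟨hr, hm⟩ | ⟨hr, hm⟩ | ⟨hr, hm⟩ <;> omega

/-! ### Cross-section domination -/

lemma cross_dom (hσ2 : IsMangoSystem σ2) {f f' : ℕ → Bool} {d : ℕ}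
    (hdr : restr f d = restr f' d) (hd : f d ≠ f' d)
    (g g' : ℕ → Bool) {n : ℕ} (hn : d < n) :
    mb σ2 f' g' ((nd σ2 f g n).length) < mb σ2 f g ((nd σ2 f g n).length) := by
  have hslen : (restr f d).length = d := restr_length f d
  cases hb : f d
  · have hb' : f' d = true := by
      cases hb2 : f' d
      · rw [hb, hb2] at hd; exact absurd rfl hd
      · rfl
    have h0 : restr f ((restr f d).length + 1) = restr f d ++ [false] := by
      rw [hslen, restr_succ, hb]
    have h1 : restr f' ((restr f d).length + 1) = restr f d ++ [true] := by
      rw [hslen, restr_succ, hb', hdr]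
    have := ((hσ2.2.2.2 (restr f d) f f' g g' (mb σ2 f g) (mb σ2 f' g') h0 h1
      (isUnionOf2_mb hσ2 f g) (isUnionOf2_mb hσ2 f' g')).1 n
      (by rw [hslen]; exact hn)).1
    exact this
  · have hb' : f' d = false := by
      cases hb2 : f' d
      · rfl
      · rw [hb, hb2] at hd; exact absurd rfl hd
    have h0 : restr f' ((restr f d).length + 1) = restr f d ++ [false] := by
      rw [hslen, restr_succ, hb', hdr]
    have h1 : restr f ((restr f d).length + 1) = restr f d ++ [true] := by
      rw [hslen, restr_succ, hb]
    have := ((hσ2.2.2.2 (restr f d) f' f g' g (mb σ2 f' g') (mb σ2 f g) h0 h1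
      (isUnionOf2_mb hσ2 f' g') (isUnionOf2_mb hσ2 f g)).1 n
      (by rw [hslen]; exact hn)).2
    exact this

end MangoAux3


section MangoAux4

/-! ### Thick sets of parameters -/

/-- The basic clopen cone in `2^ω` determined by a finite binary string. -/
def cone (u : List Bool) : Set (ℕ → Bool) := {g | restr g u.length = u}

/-- A set of parameters all of whose relative cones are uncountable. -/
def Thick (A : Set (ℕ → Bool)) : Prop :=
  A.Nonempty ∧ ∀ g ∈ A, ∀ n, ¬ (A ∩ cone (restr g n)).Countable

lemma nonempty_of_not_countable {α : Type*} {s : Set α} (h : ¬ s.Countable) :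
    s.Nonempty := by
  rcases s.eq_empty_or_nonempty with rfl | hne
  · exact absurd Set.countable_empty h
  · exact hne

lemma exists_thick {B : Set (ℕ → Bool)} (hB : ¬ B.Countable) :
    ∃ A, A ⊆ B ∧ Thick A := by
  classical
  set K : Set (ℕ → Bool) :=
    ⋃ u ∈ {u : List Bool | (B ∩ cone u).Countable}, (B ∩ cone u) with hK
  have hKc : K.Countable :=
    Set.Countable.biUnion (Set.to_countable _) (fun u hu => hu)
  refine ⟨B \ K, Set.diff_subset, ?_, ?_⟩
  · apply nonempty_of_not_countable
    intro hc
    exact hB (((hc.union hKc).mono (by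
      intro g hg
      by_cases h : g ∈ K
      · exact Or.inr h
      · exact Or.inl ⟨hg, h⟩)))
  · intro g hg n hc
    have hgB : g ∈ B := hg.1
    have hBn : (B ∩ cone (restr g n)).Countable := by
      apply ((hc.union hKc).mono)
      intro x hx
      by_cases h : x ∈ K
      · exact Or.inr h
      · exact Or.inl ⟨⟨hx.1, h⟩, hx.2⟩
    have hmem : g ∈ K := by
      refine Set.mem_biUnion hBn ⟨hgB, ?_⟩
      show restr g (restr g n).length = restr g n
      rw [restr_length]
    exact hg.2 hmem

lemma uncountable_infinite {α : Type*} {s : Set α} (h : ¬ s.Countable) :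
    s.Infinite := by
  by_contra hfin
  exact h (Set.Finite.countable (Set.not_infinite.mp hfin))

lemma thick_split {A : Set (ℕ → Bool)} (hA : Thick A) {g : ℕ → Bool} (hg : g ∈ A)
    (M : ℕ) :
    ∃ g' ∈ A, ∃ e, M ≤ e ∧ restr g' e = restr g e ∧ g' e ≠ g e := by
  classical
  have hun := hA.2 g hg M
  have hinf := uncountable_infinite hun
  obtain ⟨g', hg'⟩ := (hinf.diff (Set.finite_singleton g)).nonempty
  have hg'A : g' ∈ A := hg'.1.1
  have hg'cone : restr g' M = restr g M := by
    have := hg'.1.2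
    show restr g' M = restr g M
    have h2 : restr g' ((restr g M).length) = restr g M := this
    rwa [restr_length] at h2
  have hgne : g' ≠ g := by
    intro h; exact hg'.2 (by simp [h])
  obtain ⟨a, ha⟩ := Function.ne_iff.mp hgne
  have hex : ∃ k, g' k ≠ g k := ⟨a, ha⟩
  refine ⟨g', hg'A, Nat.find hex, ?_, ?_, Nat.find_spec hex⟩
  · by_contra hlt
    push_neg at hlt
    exact Nat.find_spec hex (eq_of_restr_eq hg'cone hlt)
  · exact restr_congr (fun k hk => by
      by_contra hc
      exact absurd (Nat.find_min hex hk) (by simp [hc]))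

lemma pick_side {A : Set (ℕ → Bool)} {g g' : ℕ → Bool} {e : ℕ}
    (hg : g ∈ A) (hg' : g' ∈ A) (hr : restr g' e = restr g e) (hne : g' e ≠ g e)
    (v : Bool) :
    ∃ p ∈ A, restr p e = restr g e ∧ restr p (e + 1) = restr g e ++ [v] := by
  by_cases h : g e = v
  · exact ⟨g, hg, rfl, by rw [restr_succ, h]⟩
  · have h' : g' e = v := by
      cases hb : g e <;> cases hb' : g' e <;> cases v <;> simp_all
    exact ⟨g', hg', hr, by rw [restr_succ, hr, h']⟩

/-- Extraction of the basic configuration: a "meet" node `x`, a deeper node `y` on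
the `b`-side of `x` at even positive offset, two members of `A` through `y⌢0`,
`y⌢1` respectively, and a member of `A` through `x⌢!b`. -/
lemma thick_config {A : Set (ℕ → Bool)} (hA : Thick A) (b : Bool) :
    ∃ (x y : List Bool) (n : ℕ) (p₀ p₁ q : ℕ → Bool),
      p₀ ∈ A ∧ p₁ ∈ A ∧ q ∈ A ∧ 0 < n ∧ y.length = x.length + 2 * n ∧
      x ++ [b] <+: y ∧
      restr p₀ (y.length + 1) = y ++ [false] ∧
      restr p₁ (y.length + 1) = y ++ [true] ∧
      restr q (x.length + 1) = x ++ [!b] := by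
  classical
  obtain ⟨g₀, hg₀⟩ := hA.1
  -- level 0 split
  obtain ⟨g₁, hg₁, e₀, -, hre₀, hne₀⟩ := thick_split hA hg₀ 0
  obtain ⟨a, haA, har, haR⟩ := pick_side hg₀ hg₁ hre₀ hne₀ b
  obtain ⟨q0, hq0A, -, hq0R⟩ := pick_side hg₀ hg₁ hre₀ hne₀ (!b)
  -- level 1 split
  obtain ⟨a', ha', e₁, he₁, hre₁, hne₁⟩ := thick_split hA haA (e₀ + 1)
  obtain ⟨c, hcA, hcr, hcR⟩ := pick_side haA ha' hre₁ hne₁ b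
  obtain ⟨q1, hq1A, -, hq1R⟩ := pick_side haA ha' hre₁ hne₁ (!b)
  obtain ⟨u0, hu0A, -, hu0R⟩ := pick_side haA ha' hre₁ hne₁ false
  obtain ⟨u1, hu1A, -, hu1R⟩ := pick_side haA ha' hre₁ hne₁ true
  -- level 2 split
  obtain ⟨c', hc', e₂, he₂, hre₂, hne₂⟩ := thick_split hA hcA (e₁ + 1)
  obtain ⟨v0, hv0A, -, hv0R⟩ := pick_side hcA hc' hre₂ hne₂ false
  obtain ⟨v1, hv1A, -, hv1R⟩ := pick_side hcA hc' hre₂ hne₂ true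
  -- names for nodes
  have hxlen : (restr g₀ e₀).length = e₀ := restr_length g₀ e₀
  have hulen : (restr a e₁).length = e₁ := restr_length a e₁
  have hvlen : (restr c e₂).length = e₂ := restr_length c e₂
  -- prefix chains
  have hxu : restr g₀ e₀ ++ [b] <+: restr a e₁ := by
    have : restr a (e₀ + 1) <+: restr a e₁ := restr_prefix a he₁
    rwa [haR] at this
  have huv : restr a e₁ ++ [b] <+: restr c e₂ := by
    have h1 : restr c (e₁ + 1) <+: restr c e₂ := restr_prefix c he₂
    rwa [hcR] at h1
  have hxv : restr g₀ e₀ ++ [b] <+: restr c e₂ :=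
    hxu.trans ((List.prefix_append _ _).trans huv)
  -- the `a`-node agrees with `c` up to e₁ : restr c e₁ = restr a e₁
  have he01 : e₀ < e₁ := by omega
  have he12 : e₁ < e₂ := by omega
  rcases Nat.even_or_odd (e₁ - e₀) with hpar | hpar
  · -- use (x, u) := (restr g₀ e₀, restr a e₁)
    obtain ⟨n, hn⟩ := hpar
    refine ⟨restr g₀ e₀, restr a e₁, n, u0, u1, q0, hu0A, hu1A, hq0A,
      by omega, by rw [hxlen, hulen]; omega, hxu, ?_, ?_, ?_⟩
    · rw [hulen]; exact hu0R
    · rw [hulen]; exact hu1R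
    · rw [hxlen]; exact hq0R
  · rcases Nat.even_or_odd (e₂ - e₁) with hpar2 | hpar2
    · -- use (u, v) := (restr a e₁, restr c e₂); note restr c e₁ = restr a e₁
      obtain ⟨n, hn⟩ := hpar2
      have hq1R' : restr q1 (e₁ + 1) = restr a e₁ ++ [!b] := hq1R
      refine ⟨restr a e₁, restr c e₂, n, v0, v1, q1, hv0A, hv1A, hq1A,
        by omega, by rw [hulen, hvlen]; omega, huv, ?_, ?_, ?_⟩
      · rw [hvlen]; exact hv0R
      · rw [hvlen]; exact hv1R
      · rw [hulen]; exact hq1R'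
    · -- both offsets odd: use (x, v)
      obtain ⟨n1, hn1⟩ := hpar
      obtain ⟨n2, hn2⟩ := hpar2
      refine ⟨restr g₀ e₀, restr c e₂, n1 + n2 + 1, v0, v1, q0, hv0A, hv1A, hq0A,
        by omega, by rw [hxlen, hvlen]; omega, hxv, ?_, ?_, ?_⟩
      · rw [hvlen]; exact hv0R
      · rw [hvlen]; exact hv1R
      · rw [hxlen]; exact hq0R

end MangoAux4


section MangoAux5

variable {σ2 : List Bool → List Bool → List ℕ}

/-- The set of cherry parameters of the section at `f` whose canonical branch lies
in `[S]`. -/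
def TS (σ2 : List Bool → List Bool → List ℕ) (S : Set (List ℕ)) (f : ℕ → Bool) :
    Set (ℕ → Bool) :=
  {g | mb σ2 f g ∈ branches S}

/-- If a section has uncountably many canonical branches in `[S]` and `S` has type
`⟨i,j⟩`, then `i = 0` and `j = 2`. -/
lemma claim1 (hσ2 : IsMangoSystem σ2) {S : Set (List ℕ)} {i j : ℕ}
    (hT : IsTypeTree S i j) {f : ℕ → Bool} (hU : ¬ (TS σ2 S f).Countable) :
    i = 0 ∧ j = 2 := by
  obtain ⟨A, hAB, hthick⟩ := exists_thick hU
  have hbr : ∀ g ∈ A, mb σ2 f g ∈ branches S := fun g hg => hAB hg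
  constructor
  · -- i = 0, configuration on the `false` side
    obtain ⟨x, y, n, p₀, p₁, q, hp₀A, hp₁A, hqA, hn, hylen, hxy, hp₀R, hp₁R, hqR⟩ :=
      thick_config hthick false
    simp only [Bool.not_false] at hqR
    have hp₀x : restr p₀ (x.length + 1) = x ++ [false] := by
      have h := restr_of_prefix (g := p₀) (u := x ++ [false])
        (by rw [hp₀R]; exact hxy.trans (List.prefix_append y [false]))
      simpa using h
    have hp₁x : restr p₁ (x.length + 1) = x ++ [false] := by
      have h := restr_of_prefix (g := p₁) (u := x ++ [false])
        (by rw [hp₁R]; exact hxy.trans (List.prefix_append y [true]))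
      simpa using h
    have hp₀y : restr p₀ y.length = y :=
      restr_of_prefix (by rw [hp₀R]; exact List.prefix_append y [false])
    have hp₁y : restr p₁ y.length = y :=
      restr_of_prefix (by rw [hp₁R]; exact List.prefix_append y [true])
    have hx₀ : restr p₀ x.length = x :=
      restr_of_prefix (by rw [hp₀x]; exact List.prefix_append x [false])
    have hx₁ : restr p₁ x.length = x :=
      restr_of_prefix (by rw [hp₁x]; exact List.prefix_append x [false])
    have hxq : restr q x.length = x :=
      restr_of_prefix (by rw [hqR]; exact List.prefix_append x [true])
    set D := (σf σ2 f x).length with hD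
    set Λ := (σf σ2 f y).length with hΛ
    have hχ₀ := hbr p₀ hp₀A
    have hχ₁ := hbr p₁ hp₁A
    have hψ := hbr q hqA
    have hagree : seg (mb σ2 f p₀) D = seg (mb σ2 f q) D :=
      (seg_mb_node hσ2 f p₀ hx₀).trans (seg_mb_node hσ2 f q hxq).symm
    have hlow : mb σ2 f p₀ D < mb σ2 f q D := lt_at hσ2 f p₀ q hp₀x hqR
    have hagree2 : seg (mb σ2 f p₀) Λ = seg (mb σ2 f p₁) Λ :=
      (seg_mb_node hσ2 f p₀ hp₀y).trans (seg_mb_node hσ2 f p₁ hp₁y).symm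
    have hneΛ : mb σ2 f p₀ Λ ≠ mb σ2 f p₁ Λ := (lt_at hσ2 f p₀ p₁ hp₀R hp₁R).ne
    have hxny : x ≠ y := by
      intro h
      have := congrArg List.length h
      omega
    have hDΛ : D < Λ := σf_len_lt hσ2 f
      ((List.prefix_append x [false]).trans hxy) hxny
    have hR := type_step_i hT hχ₀ hχ₁ hψ hDΛ hagree hlow hagree2 hneΛ
    have hrew₀ : restr p₀ (x.length + 2 * n) = y := by rw [← hylen]; exact hp₀y
    have hrew₁ : restr p₁ (x.length + 2 * n) = y := by rw [← hylen]; exact hp₁y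
    have h30 := ((cherry_section hσ2 f).2.2.2 x p₀ q (mb σ2 f p₀) (mb σ2 f q)
      hp₀x hqR (isUnionOf_mb hσ2 f p₀) (isUnionOf_mb hσ2 f q) n).1
    rw [hrew₀] at h30
    have h31 := ((cherry_section hσ2 f).2.2.2 x p₁ q (mb σ2 f p₁) (mb σ2 f q)
      hp₁x hqR (isUnionOf_mb hσ2 f p₁) (isUnionOf_mb hσ2 f q) n).1
    rw [hrew₁] at h31
    exact rrel_force_zero hR (branch_succ_mem hχ₀ Λ)
      (by rw [hagree2]; exact branch_succ_mem hχ₁ Λ) hneΛ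
      (branch_succ_mem hψ Λ) h30 h31
  · -- j = 2, configuration on the `true` side
    obtain ⟨x, y, n, p₀, p₁, q, hp₀A, hp₁A, hqA, hn, hylen, hxy, hp₀R, hp₁R, hqR⟩ :=
      thick_config hthick true
    simp only [Bool.not_true] at hqR
    have hp₀x : restr p₀ (x.length + 1) = x ++ [true] := by
      have h := restr_of_prefix (g := p₀) (u := x ++ [true])
        (by rw [hp₀R]; exact hxy.trans (List.prefix_append y [false]))
      simpa using h
    have hp₁x : restr p₁ (x.length + 1) = x ++ [true] := by
      have h := restr_of_prefix (g := p₁) (u := x ++ [true])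
        (by rw [hp₁R]; exact hxy.trans (List.prefix_append y [true]))
      simpa using h
    have hp₀y : restr p₀ y.length = y :=
      restr_of_prefix (by rw [hp₀R]; exact List.prefix_append y [false])
    have hp₁y : restr p₁ y.length = y :=
      restr_of_prefix (by rw [hp₁R]; exact List.prefix_append y [true])
    have hx₀ : restr p₀ x.length = x :=
      restr_of_prefix (by rw [hp₀x]; exact List.prefix_append x [true])
    have hxq : restr q x.length = x :=
      restr_of_prefix (by rw [hqR]; exact List.prefix_append x [false])
    set D := (σf σ2 f x).length with hD
    set Λ := (σf σ2 f y).length with hΛ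
    have hχ₀ := hbr p₀ hp₀A
    have hχ₁ := hbr p₁ hp₁A
    have hψ := hbr q hqA
    have hagree : seg (mb σ2 f p₀) D = seg (mb σ2 f q) D :=
      (seg_mb_node hσ2 f p₀ hx₀).trans (seg_mb_node hσ2 f q hxq).symm
    have hhigh : mb σ2 f q D < mb σ2 f p₀ D := lt_at hσ2 f q p₀ hqR hp₀x
    have hagree2 : seg (mb σ2 f p₀) Λ = seg (mb σ2 f p₁) Λ :=
      (seg_mb_node hσ2 f p₀ hp₀y).trans (seg_mb_node hσ2 f p₁ hp₁y).symm
    have hneΛ : mb σ2 f p₀ Λ ≠ mb σ2 f p₁ Λ := (lt_at hσ2 f p₀ p₁ hp₀R hp₁R).ne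
    have hxny : x ≠ y := by
      intro h
      have := congrArg List.length h
      omega
    have hDΛ : D < Λ := σf_len_lt hσ2 f
      ((List.prefix_append x [true]).trans hxy) hxny
    have hR := type_step_j hT hχ₀ hχ₁ hψ hDΛ hagree hhigh hagree2 hneΛ
    have hrew₀ : restr p₀ (x.length + 2 * n) = y := by rw [← hylen]; exact hp₀y
    have hrew₁ : restr p₁ (x.length + 2 * n) = y := by rw [← hylen]; exact hp₁y
    have h30 := ((cherry_section hσ2 f).2.2.2 x q p₀ (mb σ2 f q) (mb σ2 f p₀)
      hqR hp₀x (isUnionOf_mb hσ2 f q) (isUnionOf_mb hσ2 f p₀) n).2.2.1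
    rw [hrew₀] at h30
    have h31 := ((cherry_section hσ2 f).2.2.2 x q p₁ (mb σ2 f q) (mb σ2 f p₁)
      hqR hp₁x (isUnionOf_mb hσ2 f q) (isUnionOf_mb hσ2 f p₁) n).2.2.1
    rw [hrew₁] at h31
    exact rrel_force_two hR (branch_succ_mem hχ₀ Λ)
      (by rw [hagree2]; exact branch_succ_mem hχ₁ Λ) hneΛ
      (branch_succ_mem hψ Λ) h30 h31

lemma claim2core (hσ2 : IsMangoSystem σ2) {S : Set (List ℕ)} {i j : ℕ}
    (hT : IsTypeTree S i j) (hi : i = 0)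
    {f : ℕ → Bool} {A : Set (ℕ → Bool)} (hthick : Thick A)
    (hbr : ∀ g ∈ A, mb σ2 f g ∈ branches S)
    {g : ℕ → Bool} (hg : g ∈ A) {ψ : ℕ → ℕ} (hψ : ψ ∈ branches S)
    {d D : ℕ}
    (hagree : seg (mb σ2 f g) D = seg ψ D) (hlow : mb σ2 f g D < ψ D)
    (hdom : ∀ h : ℕ → Bool, ∀ n, d < n →
      ψ ((nd σ2 f h n).length) < mb σ2 f h ((nd σ2 f h n).length)) : False := by
  obtain ⟨g₂, hg₂, e, heM, hre, hne2⟩ := thick_split hthick hg (max (d + 1) (D + 1))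
  set Λ := (nd σ2 f g e).length with hΛdef
  have hΛe : e ≤ Λ := nd_len_ge hσ2 f g e
  have hDΛ : D < Λ := by omega
  have hde : d < e := by omega
  have hnode2 : nd σ2 f g₂ e = nd σ2 f g e := by
    unfold nd; rw [hre]
  have hagree2 : seg (mb σ2 f g) Λ = seg (mb σ2 f g₂) Λ := by
    have h1 : seg (mb σ2 f g) Λ = nd σ2 f g e := seg_mb_node hσ2 f g rfl
    have h2 : seg (mb σ2 f g₂) ((nd σ2 f g₂ e).length) = nd σ2 f g₂ e :=
      seg_mb_node hσ2 f g₂ rfl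
    rw [hnode2] at h2
    exact h1.trans h2.symm
  have hneΛ : mb σ2 f g Λ ≠ mb σ2 f g₂ Λ := by
    have h := ne_at hσ2 f g g₂ hre hne2
    rw [σf_restr f g e] at h
    exact h.symm
  have hR := type_step_i hT (hbr g hg) (hbr g₂ hg₂) hψ hDΛ hagree hlow hagree2 hneΛ
  have hd1 : ψ Λ < mb σ2 f g Λ := hdom g e hde
  have hd2 : ψ Λ < mb σ2 f g₂ Λ := by
    have := hdom g₂ e hde
    rwa [hnode2] at this
  have : i = 2 := rrel_force_two hR (branch_succ_mem (hbr g hg) Λ)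
    (by rw [hagree2]; exact branch_succ_mem (hbr g₂ hg₂) Λ) hneΛ
    (branch_succ_mem hψ Λ) hd1 hd2
  omega

/-- A type tree with `i = 0` captures at most one section uncountably. -/
lemma claim2 (hσ2 : IsMangoSystem σ2) {S : Set (List ℕ)} {i j : ℕ}
    (hT : IsTypeTree S i j) (hi : i = 0) {f f' : ℕ → Bool}
    (hU : ¬ (TS σ2 S f).Countable) (hU' : ¬ (TS σ2 S f').Countable) : f = f' := by
  classical
  by_contra hne
  obtain ⟨A, hAB, hthick⟩ := exists_thick hU
  obtain ⟨A', hAB', hthick'⟩ := exists_thick hU'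
  have hbr : ∀ g ∈ A, mb σ2 f g ∈ branches S := fun g hg => hAB hg
  have hbr' : ∀ g ∈ A', mb σ2 f' g ∈ branches S := fun g hg => hAB' hg
  have hex : ∃ k, f k ≠ f' k := Function.ne_iff.mp hne
  set d := Nat.find hex with hddef
  have hd : f d ≠ f' d := Nat.find_spec hex
  have hdr : restr f d = restr f' d := restr_congr (fun k hk => by
    by_contra hc
    exact absurd (Nat.find_min hex hk) (by simp [hc]))
  obtain ⟨g, hgA⟩ := hthick.1
  obtain ⟨g', hgA'⟩ := hthick'.1
  have hχψne : ∃ k, mb σ2 f g k ≠ mb σ2 f' g' k :=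
    ⟨(nd σ2 f g (d + 1)).length,
      (cross_dom hσ2 hdr hd g g' (Nat.lt_succ_self d)).ne'⟩
  set D := Nat.find hχψne with hDdef
  have hDne : mb σ2 f g D ≠ mb σ2 f' g' D := Nat.find_spec hχψne
  have hagree : seg (mb σ2 f g) D = seg (mb σ2 f' g') D :=
    seg_congr (fun k hk => by
      by_contra hc
      exact absurd (Nat.find_min hχψne hk) (by simp [hc]))
  rcases lt_or_gt_of_ne hDne with hlt | hgt
  · exact claim2core hσ2 hT hi hthick hbr hgA (hbr' g' hgA') hagree hlt
      (fun h n hn => cross_dom hσ2 hdr hd h g' hn)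
  · exact claim2core hσ2 hT hi hthick' hbr' hgA' (hbr g hgA) hagree.symm hgt
      (fun h n hn => cross_dom hσ2 hdr.symm (Ne.symm hd) h g hn)

end MangoAux5


/-- **Corollary.** If `M` is a mango tree and `𝒮` is a family of fewer than `𝔠`
Sacks trees, each of some type `⟨i,j⟩ ∈ 3 × 3`, then continuum many branches of `M`
avoid all trees in `𝒮`. -/
theorem mango_branches_avoid_small_typed_family
    (σ2 : List Bool → List Bool → List ℕ) (hσ2 : IsMangoSystem σ2)
    (𝒮 : Set (Set (List ℕ)))
    (htyped : ∀ S ∈ 𝒮, ∃ i j, i < 3 ∧ j < 3 ∧ IsTypeTree S i j)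
    (hsmall : Cardinal.mk ↥𝒮 < Cardinal.continuum) :
    Cardinal.mk ↥(branches (mangoTree σ2) \ ⋃ S ∈ 𝒮, branches S) =
      Cardinal.continuum := by
  classical
  have hcont : Cardinal.mk (ℕ → Bool) = Cardinal.continuum := by
    rw [← Cardinal.power_def Bool ℕ, Cardinal.mk_bool, Cardinal.mk_nat,
      Cardinal.two_power_aleph0]
  -- upper bound
  have hle : Cardinal.mk ↥(branches (mangoTree σ2) \ ⋃ S ∈ 𝒮, branches S) ≤
      Cardinal.continuum := by
    refine le_trans (Cardinal.mk_set_le _) ?_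
    rw [← Cardinal.power_def ℕ ℕ, Cardinal.mk_nat,
      Cardinal.power_self_eq (le_refl _), Cardinal.two_power_aleph0]
  -- the set of "spoiled" sections
  set U : Set (ℕ → Bool) := {h | ∃ S ∈ 𝒮, ¬ (TS σ2 S h).Countable} with hUdef
  have hUsmall : Cardinal.mk ↥U ≤ Cardinal.mk ↥𝒮 := by
    have hmemU : ∀ u : ↥U, ∃ S, S ∈ 𝒮 ∧ ¬ (TS σ2 S u.1).Countable := fun u => u.2
    choose Sf hSf₁ hSf₂ using hmemU
    have hinjU : Function.Injective (fun u : ↥U => (⟨Sf u, hSf₁ u⟩ : ↥𝒮)) := by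
      intro u₁ u₂ h
      have hSeq : Sf u₁ = Sf u₂ := congrArg Subtype.val h
      obtain ⟨i, j, -, -, hT⟩ := htyped (Sf u₁) (hSf₁ u₁)
      have hi : i = 0 := (claim1 hσ2 hT (hSf₂ u₁)).1
      have h2 : ¬ (TS σ2 (Sf u₁) u₂.1).Countable := by
        rw [hSeq]; exact hSf₂ u₂
      exact Subtype.ext (claim2 hσ2 hT hi (hSf₂ u₁) h2)
    exact Cardinal.mk_le_of_injective hinjU
  have hUne : U ≠ Set.univ := by
    intro h
    have hc : Cardinal.continuum ≤ Cardinal.mk ↥𝒮 := by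
      calc Cardinal.continuum = Cardinal.mk (ℕ → Bool) := hcont.symm
        _ = Cardinal.mk ↥(Set.univ : Set (ℕ → Bool)) := Cardinal.mk_univ.symm
        _ = Cardinal.mk ↥U := by rw [h]
        _ ≤ Cardinal.mk ↥𝒮 := hUsmall
    exact absurd hsmall (not_lt.mpr hc)
  obtain ⟨f₀, hf₀⟩ := (Set.ne_univ_iff_exists_notMem U).mp hUne
  have hcnt : ∀ S ∈ 𝒮, (TS σ2 S f₀).Countable := by
    intro S hS
    by_contra hc
    exact hf₀ ⟨S, hS, hc⟩
  set W : Set (ℕ → Bool) := ⋃ S ∈ 𝒮, TS σ2 S f₀ with hWdef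
  have hWsmall : Cardinal.mk ↥W < Cardinal.continuum := by
    have henum : ∀ S : ↥𝒮, ∃ F : (ℕ → Bool) → ℕ,
        ∀ g₁ ∈ TS σ2 S.1 f₀, ∀ g₂ ∈ TS σ2 S.1 f₀, F g₁ = F g₂ → g₁ = g₂ := by
      intro S
      obtain ⟨F, hF⟩ := Set.countable_iff_exists_injective.mp (hcnt S.1 S.2)
      refine ⟨fun g => if h : g ∈ TS σ2 S.1 f₀ then F ⟨g, h⟩ else 0, ?_⟩
      intro g₁ h₁ g₂ h₂ he
      simp only [dif_pos h₁, dif_pos h₂] at he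
      exact congrArg Subtype.val (hF he)
    choose E hE using henum
    have hmemW : ∀ w : ↥W, ∃ S, ∃ _ : S ∈ 𝒮, w.1 ∈ TS σ2 S f₀ := by
      intro w
      exact Set.mem_iUnion₂.mp w.2
    choose T hT₁ hT₂ using hmemW
    have hinjW : Function.Injective
        (fun w : ↥W => ((⟨T w, hT₁ w⟩ : ↥𝒮), E ⟨T w, hT₁ w⟩ w.1)) := by
      intro w₁ w₂ h
      have h1 : (⟨T w₁, hT₁ w₁⟩ : ↥𝒮) = ⟨T w₂, hT₁ w₂⟩ := congrArg Prod.fst h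
      have h2 : E ⟨T w₁, hT₁ w₁⟩ w₁.1 = E ⟨T w₂, hT₁ w₂⟩ w₂.1 := congrArg Prod.snd h
      rw [← h1] at h2
      have h3 : T w₂ = T w₁ := (congrArg Subtype.val h1).symm
      have hw₂mem : w₂.1 ∈ TS σ2 (T w₁) f₀ := by rw [← h3]; exact hT₂ w₂
      exact Subtype.ext (hE ⟨T w₁, hT₁ w₁⟩ w₁.1 (hT₂ w₁) w₂.1 hw₂mem h2)
    have hW1 : Cardinal.mk ↥W ≤ Cardinal.mk (↥𝒮 × ℕ) :=
      Cardinal.mk_le_of_injective hinjW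
    have hW2 : Cardinal.mk (↥𝒮 × ℕ) = Cardinal.mk ↥𝒮 * Cardinal.aleph0 := by
      simp [Cardinal.mk_prod]
    rw [hW2] at hW1
    exact lt_of_le_of_lt hW1
      (Cardinal.mul_lt_of_lt Cardinal.aleph0_le_continuum hsmall
        Cardinal.aleph0_lt_continuum)
  have hWc : Cardinal.continuum ≤ Cardinal.mk ↥(Wᶜ) := by
    by_contra hlt
    push_neg at hlt
    have hsum : Cardinal.mk (ℕ → Bool) ≤ Cardinal.mk ↥W + Cardinal.mk ↥(Wᶜ) := by
      calc Cardinal.mk (ℕ → Bool)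
          = Cardinal.mk ↥(Set.univ : Set (ℕ → Bool)) := Cardinal.mk_univ.symm
        _ = Cardinal.mk ↥(W ∪ Wᶜ) := by rw [Set.union_compl_self]
        _ ≤ Cardinal.mk ↥W + Cardinal.mk ↥(Wᶜ) := Cardinal.mk_union_le _ _
    rw [hcont] at hsum
    exact absurd hsum (not_le.mpr
      (Cardinal.add_lt_of_lt Cardinal.aleph0_le_continuum hWsmall hlt))
  have hmemgoal : ∀ g : ↥(Wᶜ),
      mb σ2 f₀ g.1 ∈ branches (mangoTree σ2) \ ⋃ S ∈ 𝒮, branches S := by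
    intro g
    refine ⟨mb_branch hσ2 f₀ g.1, ?_⟩
    intro hmem
    rw [Set.mem_iUnion₂] at hmem
    obtain ⟨S, hS, hb⟩ := hmem
    exact g.2 (Set.mem_biUnion hS (show g.1 ∈ TS σ2 S f₀ from hb))
  have hinj : Function.Injective (fun g : ↥(Wᶜ) =>
      (⟨mb σ2 f₀ g.1, hmemgoal g⟩ :
        ↥(branches (mangoTree σ2) \ ⋃ S ∈ 𝒮, branches S))) := by
    intro g₁ g₂ h
    have hv : mb σ2 f₀ g₁.1 = mb σ2 f₀ g₂.1 := congrArg Subtype.val h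
    by_contra hne
    exact mb_inj_g hσ2 f₀ (fun hh => hne (Subtype.ext hh)) hv
  exact le_antisymm hle (le_trans hWc (Cardinal.mk_le_of_injective hinj))
end
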